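/- Let n ≥ 2 and l > 0 be such that f : [−l, l] → ℝ is C¹ and satisfies 2·f′(t) + n·f(t)² + n ≤ 0 for all t. Then 2l < 2π/n. Moreover, for every 0 < l₀ < π/n, the function f(t) = −tan(n·t/2) is C¹ on [−l₀, l₀] and satisfies 2·f′(t) + n·f(t)² + n = 0 there; hence the bound 2π/n is sharp. -/

import Mathlib

/-!
Along a solution of `f' ≤ -c (1 + f²)` the quantity `arctan f + c t` is nonincreasing, so over
an interval of length `L` the function `arctan f` drops by at least `c L`; since it takes values
in `(-π/2, π/2)`, this forces `c L < π`. With `c = n/2` this is `2l < 2π/n`, and the equality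
case `f = -tan (n t / 2)` exists on every interval of length below `2π/n`.
-/

open Real Set

theorem antitoneOn_arctan_add_mul_of_riccati {f f' : ℝ → ℝ} {a b c : ℝ}
    (hf : ∀ t ∈ Icc a b, HasDerivAt f (f' t) t)
    (hric : ∀ t ∈ Icc a b, f' t ≤ -c * (1 + f t ^ 2)) :
    AntitoneOn (fun t => arctan (f t) + c * t) (Icc a b) := by
  have hderiv : ∀ t ∈ Icc a b,
      HasDerivAt (fun t => arctan (f t) + c * t) (1 / (1 + f t ^ 2) * f' t + c) t :=
    fun t ht => ((hasDerivAt_arctan (f t)).comp t (hf t ht)).add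
      (by simpa using (hasDerivAt_id t).const_mul c)
  refine antitoneOn_of_hasDerivWithinAt_nonpos (convex_Icc a b)
    (fun t ht => (hderiv t ht).continuousAt.continuousWithinAt)
    (fun t ht => (hderiv t (interior_subset ht)).hasDerivWithinAt) fun t ht => ?_
  have hpos : 0 < 1 + f t ^ 2 := by positivity
  calc 1 / (1 + f t ^ 2) * f' t + c ≤ 1 / (1 + f t ^ 2) * (-c * (1 + f t ^ 2)) + c := by
        gcongr; exact hric t (interior_subset ht)
    _ = 0 := by field_simp; ring

theorem mul_sub_lt_pi_of_riccati {f f' : ℝ → ℝ} {a b c : ℝ} (hab : a ≤ b)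
    (hf : ∀ t ∈ Icc a b, HasDerivAt f (f' t) t)
    (hric : ∀ t ∈ Icc a b, f' t ≤ -c * (1 + f t ^ 2)) :
    c * (b - a) < π := by
  have hdrop := antitoneOn_arctan_add_mul_of_riccati hf hric (left_mem_Icc.2 hab)
    (right_mem_Icc.2 hab) hab
  have := arctan_lt_pi_div_two (f a)
  have := neg_pi_div_two_lt_arctan (f b)
  simp only at hdrop
  linarith

theorem HasDerivAt.tan {g : ℝ → ℝ} {g' t : ℝ} (hg : HasDerivAt g g' t)
    (hcos : Real.cos (g t) ≠ 0) :
    HasDerivAt (fun s => Real.tan (g s)) ((1 + Real.tan (g t) ^ 2) * g') t := by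
  have htan := (hasDerivAt_tan hcos).comp t hg
  rwa [one_div, ← inv_one_add_tan_sq hcos, inv_inv] at htan

/-- The normalized case σ = n(n-1) of the band-width Riccati inequality, and
its sharpness via the explicit solution f(t) = -tan(n t / 2). -/
theorem riccati_width_normalized_and_sharp (n : ℕ) (hn : 2 ≤ n) :
    (∀ l : ℝ, 0 < l → ∀ f f' : ℝ → ℝ,
      (∀ t ∈ Set.Icc (-l) l, HasDerivAt f (f' t) t) →
      ContinuousOn f' (Set.Icc (-l) l) →
      (∀ t ∈ Set.Icc (-l) l,
        2 * f' t + (n : ℝ) * (f t) ^ 2 + (n : ℝ) ≤ 0) →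
      2 * l < 2 * Real.pi / n) ∧
    (∀ l₀ : ℝ, 0 < l₀ → l₀ < Real.pi / n →
      ∀ t ∈ Set.Icc (-l₀) l₀,
        HasDerivAt (fun s : ℝ => -Real.tan ((n : ℝ) * s / 2))
          (-((n : ℝ) / 2) * (1 + Real.tan ((n : ℝ) * t / 2) ^ 2)) t ∧
        2 * (-((n : ℝ) / 2) * (1 + Real.tan ((n : ℝ) * t / 2) ^ 2)) +
          (n : ℝ) * (-Real.tan ((n : ℝ) * t / 2)) ^ 2 + (n : ℝ) = 0) := by
  have hn0 : (0 : ℝ) < n := by exact_mod_cast (by omega : 0 < n)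
  refine ⟨fun l _ f f' hf _ hineq => ?_, fun l₀ _ hl₀ t ht => ⟨?_, by ring⟩⟩
  · have hric : ∀ t ∈ Icc (-l) l, f' t ≤ -((n : ℝ) / 2) * (1 + f t ^ 2) :=
      fun t ht => by linarith [hineq t ht]
    have hwidth := mul_sub_lt_pi_of_riccati (by linarith) hf hric
    rw [lt_div_iff₀ hn0]
    linarith
  · have hnl₀ : n * l₀ < π := by rwa [lt_div_iff₀' hn0] at hl₀
    have hnt : n * t ≤ n * l₀ := mul_le_mul_of_nonneg_left ht.2 hn0.le
    have hnt' : n * -l₀ ≤ n * t := mul_le_mul_of_nonneg_left ht.1 hn0.le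
    have hcos : cos (n * t / 2) ≠ 0 := (cos_pos_of_mem_Ioo ⟨by linarith, by linarith⟩).ne'
    exact (HasDerivAt.tan (((hasDerivAt_id' t).const_mul (n : ℝ)).div_const 2) hcos).fun_neg
      |>.congr_deriv (by ring)
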